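/- Let V ⊆ k[[X]] be a k[[X³]]-submodule whose quotient k[[X]]/V is one-dimensional over k, let w²A denote the ideal of A = k[[X]] ⊗_{k[[X³]]} k[[X]] generated by w², and let Im(V) denote the image of V ⊗_{k[[X³]]} k[[X]] in A. Then the quotient additive group w²A/(w²A ∩ Im(V)) is a finite-dimensional k-vector space, and its dimension over k equals: 1 if X ∈ V and X² ∈ V; 2 if X ∉ V and X² ∈ V; and 3 if X² ∉ V. -/

import Mathlib

/-!
In characteristic `3` the element `w = X ⊗ 1 - 1 ⊗ X` satisfies `w³ = X³ ⊗ 1 - 1 ⊗ X³ = 0`,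
since `X³ ∈ k⟦X³⟧`. As `k⟦X⟧` is generated by `X` over `k⟦X³⟧`, this gives
`w² (f ⊗ 1) = w² (1 ⊗ f)`, so `w²A = {w² (1 ⊗ g)}` and the quotient in question is `k⟦X⟧`
modulo `K = {g | w² (1 ⊗ g) ∈ Im(V)}`. Expanding `w² = X² ⊗ 1 + X ⊗ X + 1 ⊗ X²` shows that
`K = {g | g, X g, X² g ∈ V}`; for the inclusion `⊆`, apply the maps `v ⊗ f ↦ m(f) • [v]` into
`k⟦X⟧/V` with `m` one of the first three coefficient functionals. Moreover `X³ k⟦X⟧ ⊆ V`,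
because `X³` acts on the line `k⟦X⟧/V` by a scalar which cannot be a unit. Hence `K = X^n k⟦X⟧`
for the least `n` with `X^n k⟦X⟧ ⊆ V`, and this `n` is `1`, `2`, `3` in the three cases.
-/

open PowerSeries TensorProduct

section TensorSquare

variable {S R : Type*} [CommSemiring S] [CommRing R] [Algebra S R]

lemma three_eq_zero_tensor (h3 : (3 : R) = 0) : (3 : R ⊗[S] R) = 0 := by
  rw [← map_ofNat (algebraMap R (R ⊗[S] R)) 3, h3, map_zero]

lemma tmul_one_sub_one_tmul_sq (h3 : (3 : R) = 0) (x : R) :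
    (x ⊗ₜ[S] (1 : R) - 1 ⊗ₜ x) ^ 2 = (x ^ 2) ⊗ₜ 1 + x ⊗ₜ x + 1 ⊗ₜ (x ^ 2) := by
  have hxx : x ⊗ₜ[S] x = x ⊗ₜ (1 : R) * 1 ⊗ₜ x := by simp
  have hx1 : (x ^ 2) ⊗ₜ[S] (1 : R) = (x ⊗ₜ 1) ^ 2 := by simp
  have h1x : (1 : R) ⊗ₜ[S] (x ^ 2) = (1 ⊗ₜ x) ^ 2 := by simp
  rw [hxx, hx1, h1x]
  linear_combination (-(x ⊗ₜ[S] (1 : R) * 1 ⊗ₜ x)) * three_eq_zero_tensor (S := S) h3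

lemma tmul_one_sub_one_tmul_pow_three (h3 : (3 : R) = 0) {x : R}
    (hx : x ^ 3 ∈ Set.range (algebraMap S R)) : (x ⊗ₜ[S] (1 : R) - 1 ⊗ₜ x) ^ 3 = 0 := by
  obtain ⟨s, hs⟩ := hx
  have hcube : (x ⊗ₜ[S] (1 : R)) ^ 3 = (1 ⊗ₜ x) ^ 3 := by
    rw [Algebra.TensorProduct.tmul_pow, Algebra.TensorProduct.tmul_pow, ← hs, one_pow,
      Algebra.TensorProduct.tmul_one_eq_one_tmul]
  linear_combination hcube - (x ⊗ₜ[S] (1 : R) * 1 ⊗ₜ x * (x ⊗ₜ 1 - 1 ⊗ₜ x)) *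
    three_eq_zero_tensor (S := S) h3

lemma pow_mul_tmul_one_eq_of_mem_adjoin {x : R} {n : ℕ}
    (hw : (x ⊗ₜ[S] (1 : R) - 1 ⊗ₜ x) ^ (n + 1) = 0) {f : R}
    (hf : f ∈ Algebra.adjoin S {x}) :
    (x ⊗ₜ[S] (1 : R) - 1 ⊗ₜ x) ^ n * f ⊗ₜ 1 =
      (x ⊗ₜ[S] (1 : R) - 1 ⊗ₜ x) ^ n * 1 ⊗ₜ f := by
  set w := x ⊗ₜ[S] (1 : R) - 1 ⊗ₜ x
  induction hf using Algebra.adjoin_induction with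
  | mem y hy =>
    rw [Set.mem_singleton_iff.mp hy]
    linear_combination hw
  | algebraMap s => rw [Algebra.TensorProduct.tmul_one_eq_one_tmul]
  | add f g _ _ hf hg => rw [add_tmul, tmul_add, mul_add, mul_add, hf, hg]
  | mul f g _ _ hf hg =>
    calc w ^ n * (f * g) ⊗ₜ 1 = (w ^ n * f ⊗ₜ 1) * g ⊗ₜ 1 := by
          rw [mul_assoc, Algebra.TensorProduct.tmul_mul_tmul, mul_one]
      _ = 1 ⊗ₜ f * (w ^ n * g ⊗ₜ 1) := by rw [hf]; ring
      _ = w ^ n * 1 ⊗ₜ (f * g) := by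
          rw [hg, ← one_mul (1 : R), ← Algebra.TensorProduct.tmul_mul_tmul, one_mul]; ring

lemma mem_span_tmul_one_sub_one_tmul_pow_iff {x : R} (hadj : Algebra.adjoin S {x} = ⊤) {n : ℕ}
    (hw : (x ⊗ₜ[S] (1 : R) - 1 ⊗ₜ x) ^ (n + 1) = 0) {z : R ⊗[S] R} :
    z ∈ Ideal.span {(x ⊗ₜ[S] (1 : R) - 1 ⊗ₜ x) ^ n} ↔
      ∃ g : R, z = (x ⊗ₜ[S] (1 : R) - 1 ⊗ₜ x) ^ n * 1 ⊗ₜ g := by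
  set w := x ⊗ₜ[S] (1 : R) - 1 ⊗ₜ x
  have hmul : ∀ y : R ⊗[S] R,
      w ^ n * y = w ^ n * 1 ⊗ₜ Algebra.TensorProduct.lmul' S y := by
    intro y
    induction y using TensorProduct.induction_on with
    | zero => simp
    | tmul f g =>
      have hfg : f ⊗ₜ[S] g = f ⊗ₜ 1 * 1 ⊗ₜ g := by simp
      rw [hfg, ← mul_assoc,
        pow_mul_tmul_one_eq_of_mem_adjoin hw (Algebra.eq_top_iff.mp hadj _), mul_assoc,
        Algebra.TensorProduct.tmul_mul_tmul, one_mul, ← hfg, Algebra.TensorProduct.lmul'_apply_tmul]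
    | add y y' hy hy' => rw [mul_add, hy, hy', map_add, tmul_add, mul_add]
  rw [Ideal.mem_span_singleton']
  constructor
  · rintro ⟨y, rfl⟩
    exact ⟨_, (mul_comm y _).trans (hmul y)⟩
  · rintro ⟨g, rfl⟩
    exact ⟨1 ⊗ₜ g, mul_comm _ _⟩

end TensorSquare

namespace PowerSeries

variable {k : Type*} [Field k]

noncomputable def coeffsBelow (n : ℕ) : k⟦X⟧ →ₗ[k] (Fin n → k) :=
  LinearMap.pi fun i => coeff (i : ℕ)

lemma coeffsBelow_surjective (n : ℕ) : Function.Surjective (coeffsBelow (k := k) n) :=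
  fun v => ⟨mk fun i => if h : i < n then v ⟨i, h⟩ else 0,
    funext fun i => by simp [coeffsBelow]⟩

lemma mem_ker_coeffsBelow {n : ℕ} {g : k⟦X⟧} :
    g ∈ LinearMap.ker (coeffsBelow n) ↔ X ^ n ∣ g := by
  simp [X_pow_dvd_iff, coeffsBelow, funext_iff, Fin.forall_iff]

lemma finiteDimensional_range_and_finrank_eq_of_ker_eq {N : Type*} [AddCommGroup N]
    [Module k N] {f : k⟦X⟧ →ₗ[k] N} {n : ℕ} (hf : LinearMap.ker f = LinearMap.ker (coeffsBelow n)) :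
    FiniteDimensional k (LinearMap.range f) ∧ Module.finrank k (LinearMap.range f) = n := by
  let e : LinearMap.range f ≃ₗ[k] (Fin n → k) := f.quotKerEquivRange.symm ≪≫ₗ
    Submodule.quotEquivOfEq _ _ hf ≪≫ₗ
    (coeffsBelow (k := k) n).quotKerEquivOfSurjective (coeffsBelow_surjective n)
  exact ⟨e.symm.finiteDimensional, e.finrank_eq.trans (Module.finrank_fin_fun k)⟩

lemma X_pow_mul_eq_smul_add (j : ℕ) (g : k⟦X⟧) :
    X ^ j * g = constantCoeff g • X ^ j + X ^ (j + 1) * mk fun p => coeff (p + 1) g := by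
  conv_lhs => rw [eq_X_mul_shift_add_const g]
  rw [smul_eq_C_mul]
  ring

section Subspace

variable {V : Submodule k k⟦X⟧}

lemma X_pow_mul_mem_of_mem {j : ℕ} (hV : ∀ g, X ^ (j + 1) * g ∈ V) (hj : X ^ j ∈ V)
    (g : k⟦X⟧) : X ^ j * g ∈ V := by
  rw [X_pow_mul_eq_smul_add]
  exact V.add_mem (V.smul_mem _ hj) (hV _)

lemma X_pow_mul_mem_iff_X_dvd {j : ℕ} (hV : ∀ g, X ^ (j + 1) * g ∈ V) (hj : X ^ j ∉ V)
    (g : k⟦X⟧) : X ^ j * g ∈ V ↔ X ∣ g := by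
  rw [X_dvd_iff, X_pow_mul_eq_smul_add, Submodule.add_mem_iff_left _ (hV _)]
  refine ⟨fun h => by_contra fun hg => hj ((V.smul_mem_iff hg).mp h), fun h => ?_⟩
  rw [h, zero_smul]
  exact V.zero_mem

lemma forall_X_pow_mul_mem_iff {n N : ℕ} (hn : 0 < n) (hnN : n ≤ N)
    (hV : ∀ g, X ^ n * g ∈ V) (hn' : X ^ (n - 1) ∉ V) (g : k⟦X⟧) :
    (∀ i < N, X ^ i * g ∈ V) ↔ X ^ n ∣ g := by
  refine ⟨fun hg => ?_, fun ⟨h, hh⟩ i _ => hh ▸ mul_left_comm (X ^ i) _ h ▸ hV _⟩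
  suffices ∀ j ≤ n, X ^ j ∣ g from this n le_rfl
  intro j hj
  induction j with
  | zero => exact (pow_zero (X : k⟦X⟧)).symm ▸ one_dvd g
  | succ j ih =>
    obtain ⟨h, rfl⟩ := ih (by omega)
    have hh : X ^ (n - 1) * h ∈ V := by
      have := hg (n - 1 - j) (by omega)
      rwa [← mul_assoc, ← pow_add, Nat.sub_add_cancel (by omega)] at this
    obtain ⟨h', rfl⟩ := (X_pow_mul_mem_iff_X_dvd (by rwa [Nat.sub_add_cancel hn]) hn' h).mp hh
    exact ⟨h', by ring⟩

lemma mul_mem_of_finrank_quotient_eq_one (hV : Module.finrank k (k⟦X⟧ ⧸ V) = 1)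
    {a : k⟦X⟧} (ha : constantCoeff a = 0) (haV : ∀ v ∈ V, a * v ∈ V) (g : k⟦X⟧) :
    a * g ∈ V := by
  obtain ⟨c, hc, -⟩ := (V.mapQ V (LinearMap.mulLeft k a) fun v hv => haV v hv)
    |>.existsUnique_eq_smul_id_of_finrank_eq_one hV
  have hsub : ∀ g, (a - C c) * g ∈ V := fun g => by
    have : V.mkQ (a * g) = c • V.mkQ g := LinearMap.congr_fun hc (V.mkQ g)
    rwa [← map_smul, ← sub_eq_zero, ← map_sub, Submodule.mkQ_apply,
      Submodule.Quotient.mk_eq_zero, smul_eq_C_mul, ← sub_mul] at this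
  obtain rfl | hc0 := eq_or_ne c 0
  · simpa using hsub g
  have hu : IsUnit (a - C c) := isUnit_iff_constantCoeff.mpr (by simp [ha, hc0])
  refine absurd (eq_top_iff.mpr fun h _ => ?_)
    (Submodule.Quotient.nontrivial_iff.mp (Module.nontrivial_of_finrank_eq_succ hV))
  simpa [← mul_assoc] using hsub (↑hu.unit⁻¹ * h)

end Subspace

section Pairing

variable {S : Subalgebra k k⟦X⟧} {n : ℕ}
  {M : Type*} [AddCommGroup M] [Module k M]

lemma map_C_add_X_pow_mul_mul (ℓ : k⟦X⟧ →ₗ[k] M) (hℓ : ∀ g, ℓ (X ^ n * g) = 0) (c : k)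
    (t v : k⟦X⟧) : ℓ ((C c + X ^ n * t) * v) = c • ℓ v := by
  rw [add_mul, map_add, mul_assoc, hℓ, add_zero, ← smul_eq_C_mul, map_smul]

/-- Balanced over `S` because `S ⊆ k + X ^ n k⟦X⟧` and both `ℓ` and `m` kill `X ^ n k⟦X⟧`. -/
noncomputable def truncPairing (hS : ∀ s ∈ S, ∃ (c : k) (t : k⟦X⟧), s = C c + X ^ n * t)
    (ℓ : k⟦X⟧ →ₗ[k] M) (hℓ : ∀ g, ℓ (X ^ n * g) = 0)
    (m : k⟦X⟧ →ₗ[k] k) (hm : ∀ g, m (X ^ n * g) = 0) : k⟦X⟧ ⊗[S] k⟦X⟧ →ₗ[k] M where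
  __ := liftAddHom
    (AddMonoidHom.mk' (fun v => AddMonoidHom.mk' (fun f => m f • ℓ v) fun f f' => by
      simp [add_smul]) fun v v' => by ext f; simp)
    fun s v f => by
      obtain ⟨c, t, hs⟩ := hS s s.2
      change m f • ℓ (s • v) = m (s • f) • ℓ v
      rw [Subalgebra.smul_def, Subalgebra.smul_def, hs, smul_eq_mul, smul_eq_mul,
        map_C_add_X_pow_mul_mul _ hℓ, map_C_add_X_pow_mul_mul _ hm, smul_eq_mul, mul_smul,
        smul_comm]
  map_smul' c z := by
    induction z using TensorProduct.induction_on with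
    | zero => simp
    | tmul v f => simp [smul_tmul', liftAddHom_tmul, smul_comm c]
    | add z z' hz hz' => simp_all [smul_add]

lemma truncPairing_tmul (hS : ∀ s ∈ S, ∃ (c : k) (t : k⟦X⟧), s = C c + X ^ n * t)
    (ℓ : k⟦X⟧ →ₗ[k] M) (hℓ : ∀ g, ℓ (X ^ n * g) = 0)
    (m : k⟦X⟧ →ₗ[k] k) (hm : ∀ g, m (X ^ n * g) = 0) (v f : k⟦X⟧) :
    truncPairing hS ℓ hℓ m hm (v ⊗ₜ f) = m f • ℓ v :=
  rfl

lemma span_tmul_le_ker_truncPairing {V : Submodule k k⟦X⟧}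
    (hS : ∀ s ∈ S, ∃ (c : k) (t : k⟦X⟧), s = C c + X ^ n * t)
    (ℓ : k⟦X⟧ →ₗ[k] M) (hℓ : ∀ g, ℓ (X ^ n * g) = 0) (hVℓ : V ≤ LinearMap.ker ℓ)
    (m : k⟦X⟧ →ₗ[k] k) (hm : ∀ g, m (X ^ n * g) = 0) :
    Submodule.span k {a | ∃ v ∈ V, ∃ f, a = v ⊗ₜ[S] f} ≤
      LinearMap.ker (truncPairing hS ℓ hℓ m hm) :=
  Submodule.span_le.mpr <| by
    rintro _ ⟨v, hv, f, rfl⟩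
    rw [SetLike.mem_coe, LinearMap.mem_ker, truncPairing_tmul, hVℓ hv, smul_zero]

end Pairing

section ThreeSections

variable {φ : k⟦X⟧ →ₐ[k] k⟦X⟧}
  (hφ : ∀ (f : k⟦X⟧) (n : ℕ), coeff n (φ f) = if 3 ∣ n then coeff (n / 3) f else 0)
include hφ

lemma map_X_eq_X_pow_three : φ X = X ^ 3 := by
  ext n
  rw [hφ, coeff_X_pow]
  split_ifs <;> simp [coeff_X] <;> omega

lemma coeff_map_mk_mul_X_pow {i : ℕ} (hi : i < 3) (f : k⟦X⟧) (n : ℕ) :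
    coeff n (φ (mk fun p => coeff (3 * p + i) f) * X ^ i) =
      if n % 3 = i then coeff n f else 0 := by
  rw [coeff_mul_X_pow', hφ]
  split_ifs <;> first | rfl | (exfalso; omega) |
    rw [coeff_mk, show 3 * ((n - i) / 3) + i = n by omega]

lemma eq_sum_map_mul_X_pow (f : k⟦X⟧) :
    f = ∑ i ∈ Finset.range 3, φ (mk fun p => coeff (3 * p + i) f) * X ^ i := by
  ext n
  have h : ∀ i ∈ Finset.range 3, coeff n (φ (mk fun p => coeff (3 * p + i) f) * X ^ i) =
      if n % 3 = i then coeff n f else 0 := fun i hi =>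
    coeff_map_mk_mul_X_pow hφ (Finset.mem_range.mp hi) f n
  rw [map_sum, Finset.sum_congr rfl h, Finset.sum_ite_eq]
  simp [Nat.mod_lt]

lemma adjoin_range_X_eq_top : Algebra.adjoin φ.range {(X : k⟦X⟧)} = ⊤ := by
  refine eq_top_iff.mpr fun f _ => ?_
  rw [eq_sum_map_mul_X_pow hφ f]
  refine Subalgebra.sum_mem _ fun i _ => Subalgebra.mul_mem _ ?_ ?_
  · exact Subalgebra.algebraMap_mem _ (⟨_, φ.mem_range_self _⟩ : φ.range)
  · exact Subalgebra.pow_mem _ (Algebra.self_mem_adjoin_singleton _ _) i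

lemma exists_eq_C_add_X_pow_three_mul (s : k⟦X⟧) (hs : s ∈ φ.range) :
    ∃ (c : k) (t : k⟦X⟧), s = C c + X ^ 3 * t := by
  obtain ⟨g, rfl⟩ := φ.mem_range.mp hs
  refine ⟨constantCoeff g, φ (mk fun p => coeff (p + 1) g), ?_⟩
  have h := congrArg φ (eq_X_mul_shift_add_const g)
  rw [map_add, map_mul, map_X_eq_X_pow_three hφ, ← algebraMap_eq, AlgHom.commutes] at h
  rw [h, add_comm, algebraMap_eq]

end ThreeSections

noncomputable def sqMulOneTmul (S : Subalgebra k k⟦X⟧) : k⟦X⟧ →ₗ[k] k⟦X⟧ ⊗[S] k⟦X⟧ :=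
  LinearMap.mulLeft k (((X : k⟦X⟧) ⊗ₜ[S] (1 : k⟦X⟧) - (1 : k⟦X⟧) ⊗ₜ[S] (X : k⟦X⟧)) ^ 2)
    ∘ₗ (TensorProduct.mk S k⟦X⟧ k⟦X⟧ 1).restrictScalars k

lemma sqMulOneTmul_apply (S : Subalgebra k k⟦X⟧) (g : k⟦X⟧) :
    sqMulOneTmul S g =
      ((X : k⟦X⟧) ⊗ₜ[S] (1 : k⟦X⟧) - (1 : k⟦X⟧) ⊗ₜ[S] (X : k⟦X⟧)) ^ 2 * 1 ⊗ₜ g :=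
  rfl

section WSquare

variable [CharP k 3] {S : Subalgebra k k⟦X⟧}
  (hS : ∀ s ∈ S, ∃ (c : k) (t : k⟦X⟧), s = C c + X ^ 3 * t) (hX3 : X ^ 3 ∈ S)
  (hadj : Algebra.adjoin S {(X : k⟦X⟧)} = ⊤) {V : Submodule k k⟦X⟧}

lemma three_eq_zero : (3 : k⟦X⟧) = 0 := by
  rw [← map_ofNat C 3, CharP.ofNat_eq_zero, map_zero]

include hX3 in
lemma tmul_one_sub_one_tmul_X_pow_three :
    ((X : k⟦X⟧) ⊗ₜ[S] (1 : k⟦X⟧) - (1 : k⟦X⟧) ⊗ₜ[S] (X : k⟦X⟧)) ^ 3 = 0 :=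
  tmul_one_sub_one_tmul_pow_three three_eq_zero ⟨⟨_, hX3⟩, rfl⟩

include hS hX3 hadj in
lemma sq_mul_one_tmul_mem_span_iff (hV : ∀ g, X ^ 3 * g ∈ V) (g : k⟦X⟧) :
    ((X : k⟦X⟧) ⊗ₜ[S] (1 : k⟦X⟧) - (1 : k⟦X⟧) ⊗ₜ[S] (X : k⟦X⟧)) ^ 2 * 1 ⊗ₜ g ∈
        Submodule.span k {a | ∃ v ∈ V, ∃ f, a = v ⊗ₜ[S] f} ↔ ∀ i < 3, X ^ i * g ∈ V := by
  rw [← pow_mul_tmul_one_eq_of_mem_adjoin (S := S) (x := X) (n := 2) (f := g)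
    (tmul_one_sub_one_tmul_X_pow_three hX3) (Algebra.eq_top_iff.mp hadj _),
    tmul_one_sub_one_tmul_sq (S := S) three_eq_zero, add_mul, add_mul]
  simp only [Algebra.TensorProduct.tmul_mul_tmul, one_mul, mul_one]
  constructor
  · intro hmem i hi
    have hm : ∀ g, coeff (R := k) (2 - i) (X ^ 3 * g) = 0 := fun g => by
      rw [coeff_X_pow_mul', if_neg (by omega)]
    have hℓ : ∀ g, V.mkQ (X ^ 3 * g) = 0 := fun g =>
      (Submodule.Quotient.mk_eq_zero V).mpr (hV g)
    -- pairing with `coeff (2 - i)` isolates the class of `X ^ i * g`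
    have hΛ := span_tmul_le_ker_truncPairing hS V.mkQ hℓ (Submodule.ker_mkQ V).ge _ hm hmem
    rw [LinearMap.mem_ker, map_add, map_add, truncPairing_tmul, truncPairing_tmul,
      truncPairing_tmul] at hΛ
    rw [← Submodule.Quotient.mk_eq_zero]
    interval_cases i <;> simpa [coeff_X, coeff_X_pow, coeff_one] using hΛ
  · intro hg
    refine add_mem (add_mem ?_ ?_) ?_ <;> refine Submodule.subset_span ⟨_, ?_, _, rfl⟩
    exacts [hg 2 (by norm_num), by simpa using hg 1 (by norm_num),
      by simpa using hg 0 (by norm_num)]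

include hX3 hadj in
lemma map_mkQ_restrictScalars_span_sq (ImV : Submodule k (k⟦X⟧ ⊗[S] k⟦X⟧)) :
    ((Ideal.span {((X : k⟦X⟧) ⊗ₜ[S] (1 : k⟦X⟧) - (1 : k⟦X⟧) ⊗ₜ[S] (X : k⟦X⟧)) ^ 2})
      |>.restrictScalars k).map ImV.mkQ = LinearMap.range (ImV.mkQ ∘ₗ sqMulOneTmul S) := by
  rw [LinearMap.range_comp]
  congr 1
  ext z
  rw [Submodule.restrictScalars_mem,
    mem_span_tmul_one_sub_one_tmul_pow_iff (x := X) (n := 2) hadj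
      (tmul_one_sub_one_tmul_X_pow_three hX3)]
  simp [sqMulOneTmul_apply, eq_comm]

include hS hX3 hadj in
lemma ker_mkQ_comp_sqMulOneTmul {n : ℕ} (hn : 0 < n) (hn3 : n ≤ 3)
    (hV : ∀ g, X ^ n * g ∈ V) (hV' : X ^ (n - 1) ∉ V) :
    LinearMap.ker ((Submodule.span k {a | ∃ v ∈ V, ∃ f : k⟦X⟧, a = v ⊗ₜ[S] f}).mkQ ∘ₗ
      sqMulOneTmul S) = LinearMap.ker (coeffsBelow n) := by
  have hV3 : ∀ g, X ^ 3 * g ∈ V := fun g => by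
    have := hV (X ^ (3 - n) * g)
    rwa [← mul_assoc, ← pow_add, Nat.add_sub_cancel' hn3] at this
  ext g
  rw [LinearMap.mem_ker, LinearMap.comp_apply, Submodule.mkQ_apply,
    Submodule.Quotient.mk_eq_zero, sqMulOneTmul_apply,
    sq_mul_one_tmul_mem_span_iff hS hX3 hadj hV3, forall_X_pow_mul_mem_iff hn hn3 hV hV',
    mem_ker_coeffsBelow]

end WSquare

end PowerSeries

/-- Let `k` be a field of characteristic `3`, `φ : k[[X]] → k[[X]]` the `k`-algebra
homomorphism `X ↦ X³` (characterized on coefficients), with range `k[[X³]] = φ.range`,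
and `A = k[[X]] ⊗_{k[[X³]]} k[[X]]`, with `w = X⊗1 − 1⊗X ∈ A`.  Let `V ⊆ k[[X]]` be a
`k[[X³]]`-submodule (a `k`-subspace stable under multiplication by all `φ f`) with
`k[[X]]/V` one-dimensional over `k`, let `W = w²A` be the ideal of `A` generated by `w²`,
and let `Im(V) ⊆ A` be the additive subgroup generated by the elements `v ⊗ f` with
`v ∈ V`, `f ∈ k[[X]]` (a `k`-subspace of `A`).  Then the quotient `w²A/(w²A ∩ Im(V))`,
realized as the image of `W` in `A/Im(V)`, is a finite-dimensional `k`-vector space whose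
dimension equals `1` if `X ∈ V` and `X² ∈ V`, `2` if `X ∉ V` and `X² ∈ V`, and `3` if
`X² ∉ V`. -/
theorem finrank_w_sq_ideal_quotient
    {k : Type*} [Field k] [CharP k 3]
    (φ : PowerSeries k →ₐ[k] PowerSeries k)
    (hφ : ∀ (f : PowerSeries k) (n : ℕ),
      coeff n (φ f) = if 3 ∣ n then coeff (n / 3) f else 0)
    (V : Submodule k (PowerSeries k))
    (hVmod : ∀ (f : PowerSeries k), ∀ v ∈ V, φ f * v ∈ V)
    (hdim : Module.finrank k (PowerSeries k ⧸ V) = 1)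
    (W : Submodule k (PowerSeries k ⊗[φ.range] PowerSeries k))
    (hW : W = (Ideal.span
      {((X : PowerSeries k) ⊗ₜ[φ.range] (1 : PowerSeries k) -
          (1 : PowerSeries k) ⊗ₜ[φ.range] (X : PowerSeries k)) ^ 2}).restrictScalars k)
    (ImV : Submodule k (PowerSeries k ⊗[φ.range] PowerSeries k))
    (hImV : ImV = Submodule.span k
      {a : PowerSeries k ⊗[φ.range] PowerSeries k |
        ∃ v ∈ V, ∃ f : PowerSeries k, a = v ⊗ₜ[φ.range] f}) :
    FiniteDimensional k (W.map ImV.mkQ) ∧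
    ((X : PowerSeries k) ∈ V → (X : PowerSeries k) ^ 2 ∈ V →
      Module.finrank k (W.map ImV.mkQ) = 1) ∧
    ((X : PowerSeries k) ∉ V → (X : PowerSeries k) ^ 2 ∈ V →
      Module.finrank k (W.map ImV.mkQ) = 2) ∧
    ((X : PowerSeries k) ^ 2 ∉ V →
      Module.finrank k (W.map ImV.mkQ) = 3) := by
  subst hW hImV
  have hφX : φ X = X ^ 3 := map_X_eq_X_pow_three hφ
  have hX3S : X ^ 3 ∈ φ.range := hφX ▸ φ.mem_range_self X
  have hX3V : ∀ g, X ^ 3 * g ∈ V :=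
    mul_mem_of_finrank_quotient_eq_one hdim (by simp) fun v hv => hφX ▸ hVmod X v hv
  have hX2V : X ^ 2 ∈ V → ∀ g, X ^ 2 * g ∈ V := X_pow_mul_mem_of_mem hX3V
  have hXV : X ∈ V → X ^ 2 ∈ V → ∀ g, X ^ 1 * g ∈ V := fun hX hX2 =>
    X_pow_mul_mem_of_mem (hX2V hX2) (by rwa [pow_one])
  have hone : X ∈ V → X ^ 2 ∈ V → X ^ 0 ∉ V := fun hX hX2 h1 =>
    Submodule.Quotient.nontrivial_iff.mp (Module.nontrivial_of_finrank_eq_succ hdim) <|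
      eq_top_iff.mpr fun g _ => by simpa using X_pow_mul_mem_of_mem (hXV hX hX2) h1 g
  rw [map_mkQ_restrictScalars_span_sq hX3S (adjoin_range_X_eq_top hφ)]
  have key {n : ℕ} (hn : 0 < n) (hn3 : n ≤ 3) (hV : ∀ g, X ^ n * g ∈ V)
      (hV' : X ^ (n - 1) ∉ V) :=
    finiteDimensional_range_and_finrank_eq_of_ker_eq <| ker_mkQ_comp_sqMulOneTmul
      (exists_eq_C_add_X_pow_three_mul hφ) hX3S (adjoin_range_X_eq_top hφ) hn hn3 hV hV'
  have dim1 (hX : X ∈ V) (hX2 : X ^ 2 ∈ V) :=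
    key one_pos (by norm_num) (hXV hX hX2) (hone hX hX2)
  have dim2 (hX : X ∉ V) (hX2 : X ^ 2 ∈ V) :=
    key two_pos (by norm_num) (hX2V hX2) (by simpa using hX)
  have dim3 (hX2 : X ^ 2 ∉ V) := key three_pos le_rfl hX3V hX2
  refine ⟨?_, fun hX hX2 => (dim1 hX hX2).2, fun hX hX2 => (dim2 hX hX2).2,
    fun hX2 => (dim3 hX2).2⟩
  by_cases hX2 : X ^ 2 ∈ V
  · by_cases hX : X ∈ V
    exacts [(dim1 hX hX2).1, (dim2 hX hX2).1]
  · exact (dim3 hX2).1
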